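/- Let 𝔤 be a finite-dimensional real Lie algebra, let V₁ and V₂ be linear subspaces of 𝔤 with 𝔤 = V₁ ⊕ V₂ (internal direct sum), such that ⁅V₁,V₁⁆ = V₂, ⁅𝔤,V₂⁆ = 0, V₂ equals the center of 𝔤, and dim V₂ = 1. Let ⟨·,·⟩ be an inner product defined on V₁. Then dim V₁ = 2n for some integer n ≥ 1, and there exist Z ∈ V₂, vectors X₁,…,Xₙ,Y₁,…,Yₙ ∈ V₁, and positive real numbers a₁,…,aₙ, such that (X₁,…,Xₙ,Y₁,…,Yₙ,Z) is a basis of 𝔤, the only non-trivial bracket relations among the basis vectors are ⁅X_i,Y_i⁆ = Z for 1 ≤ i ≤ n (i.e., ⁅X_i,Y_j⁆ = 0 for i ≠ j, ⁅X_i,X_j⁆ = 0 and ⁅Y_i,Y_j⁆ = 0 for all i,j), and the family (a₁X₁,…,aₙXₙ,a₁Y₁,…,aₙYₙ) is orthonormal for ⟨·,·⟩. -/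

import Mathlib

/-!
The bracket of `V₁` lands in the line `V₂ = ℝ Z`, so it is `ω(u, v) Z` for an alternating form
`ω` on `V₁`, nondegenerate because `V₂` is the whole center. With respect to the inner product,
`ω(u, v) = ⟪J u, v⟫` for an injective skew-adjoint `J`. A unit eigenvector `e` of the symmetric
operator `J ∘ J` spans, together with `J e`, a `J`-invariant plane whose orthogonal complement
is again `J`-invariant; repeating inside the complement gives an orthonormal basis
`(eᵢ, fᵢ)` with `J eᵢ = cᵢ fᵢ`, `J fᵢ = -cᵢ eᵢ`, `cᵢ > 0`. Then `Xᵢ = eᵢ / √cᵢ`, `Yᵢ = fᵢ / √cᵢ`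
and `Z` form the required basis, with `aᵢ = √cᵢ`.
-/

/-- For subspaces `V, W` of a Lie algebra, the linear span of brackets `⁅x,y⁆`, `x ∈ V`,
`y ∈ W`. -/
def bracketSpan {L : Type*} [LieRing L] [LieAlgebra ℝ L] (V W : Submodule ℝ L) :
    Submodule ℝ L :=
  Submodule.span ℝ (Set.image2 (fun x y => ⁅x, y⁆) (V : Set L) (W : Set L))

open Module RealInnerProductSpace

section SkewAdjoint

variable {E : Type*} [NormedAddCommGroup E] [InnerProductSpace ℝ E] {J : E →ₗ[ℝ] E}

/-- For skew-adjoint `J`, the planes spanned by `e i` and `J (e i)` are then `J`-invariant and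
mutually orthogonal. -/
def IsSkewAdapted (J : E →ₗ[ℝ] E) {ι : Type*} (e : ι → E) : Prop :=
  Orthonormal ℝ e ∧ (∀ i j, ⟪e i, J (e j)⟫ = 0) ∧ ∀ i, ∃ μ : ℝ, J (J (e i)) = μ • e i

namespace LinearMap.IsSkewAdjoint

theorem inner_apply_left (hJ : (innerₗ E).IsSkewAdjoint J) (u v : E) :
    ⟪J u, v⟫ = -⟪u, J v⟫ := by
  simpa [inner_neg_right] using hJ u v

theorem inner_self_apply (hJ : (innerₗ E).IsSkewAdjoint J) (u : E) : ⟪u, J u⟫ = 0 := by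
  have := hJ.inner_apply_left u u
  rw [real_inner_comm] at this
  linarith

theorem apply_mem_orthogonal (hJ : (innerₗ E).IsSkewAdjoint J) {W : Submodule ℝ E}
    (hW : W.map J ≤ W) {v : E} (hv : v ∈ Wᗮ) : J v ∈ Wᗮ :=
  (Submodule.mem_orthogonal W _).2 fun w hw => by
    rw [← real_inner_comm, hJ.inner_apply_left, real_inner_comm,
      Submodule.inner_right_of_mem_orthogonal (hW ⟨w, hw, rfl⟩) hv, neg_zero]

theorem isSymmetric_comp_self (hJ : (innerₗ E).IsSkewAdjoint J) : (J ∘ₗ J).IsSymmetric :=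
  fun u v => by
    rw [LinearMap.comp_apply, LinearMap.comp_apply, hJ.inner_apply_left, hJ.inner_apply_left,
      neg_neg]

end LinearMap.IsSkewAdjoint

namespace IsSkewAdapted

theorem exists_cons [FiniteDimensional ℝ E] (hJ : (innerₗ E).IsSkewAdjoint J) {k : ℕ}
    {e : Fin k → E} (he : IsSkewAdapted J e) (hk : 2 * k < finrank ℝ E) :
    ∃ v : E, IsSkewAdapted J (Fin.cons v e : Fin (k + 1) → E) := by
  obtain ⟨he_on, he_perp, he_eigen⟩ := he
  set W := Submodule.span ℝ (Set.range (Sum.elim e (J ∘ e)))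
  have he_W : ∀ i, e i ∈ W := fun i => Submodule.subset_span ⟨.inl i, rfl⟩
  have hJe_W : ∀ i, J (e i) ∈ W := fun i => Submodule.subset_span ⟨.inr i, rfl⟩
  have hJW : W.map J ≤ W := by
    rw [Submodule.map_span_le]
    rintro _ ⟨i | i, rfl⟩
    · exact hJe_W i
    · obtain ⟨μ, hμ⟩ := he_eigen i
      simpa [hμ] using W.smul_mem μ (he_W i)
  have hdim : 0 < finrank ℝ Wᗮ := by
    have hW : finrank ℝ W ≤ 2 * k := (finrank_range_le_card _).trans (by simp [two_mul])
    have := W.finrank_add_finrank_orthogonal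
    omega
  -- any unit eigenvector of `J ∘ J` on `Wᗮ` extends the family
  have hT := hJ.isSymmetric_comp_self.restrict_invariant fun v hv =>
    hJ.apply_mem_orthogonal hJW (hJ.apply_mem_orthogonal hJW hv)
  set v := hT.eigenvectorBasis rfl ⟨0, hdim⟩
  have hv_norm : ‖(v : E)‖ = 1 := (hT.eigenvectorBasis rfl).orthonormal.1 _
  have hv_e : ∀ i, ⟪(v : E), e i⟫ = 0 := fun i =>
    Submodule.inner_left_of_mem_orthogonal (he_W i) v.2
  have hv_Je : ∀ i, ⟪(v : E), J (e i)⟫ = 0 := fun i =>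
    Submodule.inner_left_of_mem_orthogonal (hJe_W i) v.2
  have he_Jv : ∀ i, ⟪e i, J v⟫ = 0 := fun i =>
    Submodule.inner_right_of_mem_orthogonal (he_W i) (hJ.apply_mem_orthogonal hJW v.2)
  refine ⟨v, orthonormal_iff_ite.2 fun i j => ?_, fun i j => ?_, fun i => ?_⟩
  · cases i using Fin.cases <;> cases j using Fin.cases <;>
      simp [hv_e, real_inner_comm (v : E), hv_norm, orthonormal_iff_ite.1 he_on,
        Fin.succ_ne_zero, (Fin.succ_ne_zero _).symm]
  · cases i using Fin.cases <;> cases j using Fin.cases <;>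
      simp [he_perp, hv_Je, he_Jv, hJ.inner_self_apply]
  · cases i using Fin.cases
    · exact ⟨_, congrArg Subtype.val (hT.apply_eigenvectorBasis rfl ⟨0, hdim⟩)⟩
    · simpa using he_eigen _

theorem apply_apply (hJ : (innerₗ E).IsSkewAdjoint J) {ι : Type*} {e : ι → E}
    (he : IsSkewAdapted J e) (i : ι) : J (J (e i)) = -(‖J (e i)‖ ^ 2 • e i) := by
  obtain ⟨μ, hμ⟩ := he.2.2 i
  have : μ = -‖J (e i)‖ ^ 2 := calc
    μ = ⟪J (J (e i)), e i⟫ := by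
      rw [hμ, real_inner_smul_left, real_inner_self_eq_norm_sq, he.1.1 i, one_pow, mul_one]
    _ = -‖J (e i)‖ ^ 2 := by rw [hJ.inner_apply_left, real_inner_self_eq_norm_sq]
  rw [hμ, this, neg_smul]

theorem orthonormal_sum_elim (hJ : (innerₗ E).IsSkewAdjoint J) (hinj : Function.Injective J)
    {ι : Type*} {e : ι → E} (he : IsSkewAdapted J e) :
    Orthonormal ℝ (Sum.elim e fun i => ‖J (e i)‖⁻¹ • J (e i)) := by
  classical
  have hne : ∀ i, ‖J (e i)‖ ≠ 0 := fun i =>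
    norm_ne_zero_iff.2 ((map_ne_zero_iff J hinj).2 (he.1.ne_zero i))
  have hJJ : ∀ i j, ⟪J (e i), J (e j)⟫ = ‖J (e j)‖ ^ 2 * ⟪e i, e j⟫ := fun i j => by
    rw [hJ.inner_apply_left, he.apply_apply hJ, inner_neg_right, neg_neg, real_inner_smul_right]
  rw [orthonormal_iff_ite]
  rintro (i | i) (j | j)
  · simpa using orthonormal_iff_ite.1 he.1 i j
  · simp [real_inner_smul_right, he.2.1]
  · simp [real_inner_smul_left, hJ.inner_apply_left, he.2.1]
  · simp only [Sum.elim_inr, real_inner_smul_left, real_inner_smul_right, hJJ,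
      orthonormal_iff_ite.1 he.1, Sum.inr.injEq]
    split_ifs with h
    · subst h
      field_simp [hne i]
    · simp

theorem two_mul_le_finrank [FiniteDimensional ℝ E] (hJ : (innerₗ E).IsSkewAdjoint J)
    (hinj : Function.Injective J) {k : ℕ} {e : Fin k → E} (he : IsSkewAdapted J e) :
    2 * k ≤ finrank ℝ E := by
  simpa [two_mul] using
    (he.orthonormal_sum_elim hJ hinj).linearIndependent.fintype_card_le_finrank

end IsSkewAdapted

namespace LinearMap.IsSkewAdjoint

variable [FiniteDimensional ℝ E]

theorem exists_isSkewAdapted (hJ : (innerₗ E).IsSkewAdjoint J) :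
    ∀ k : ℕ, 2 * k ≤ finrank ℝ E → ∃ e : Fin k → E, IsSkewAdapted J e
  | 0, _ => ⟨Fin.elim0, orthonormal_iff_ite.2 (fun i => i.elim0), fun i => i.elim0,
      fun i => i.elim0⟩
  | k + 1, hk => by
    obtain ⟨e, he⟩ := hJ.exists_isSkewAdapted k (by omega)
    obtain ⟨v, hv⟩ := he.exists_cons hJ (by omega)
    exact ⟨_, hv⟩

theorem exists_orthonormal_normal_form (hJ : (innerₗ E).IsSkewAdjoint J)
    (hinj : Function.Injective J) :
    ∃ n : ℕ, finrank ℝ E = 2 * n ∧ ∃ (e f : Fin n → E) (c : Fin n → ℝ), (∀ i, 0 < c i) ∧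
      Orthonormal ℝ (Sum.elim e f) ∧ (∀ i, J (e i) = c i • f i) ∧
      ∀ i, J (f i) = -(c i • e i) := by
  obtain ⟨e, he⟩ := hJ.exists_isSkewAdapted (finrank ℝ E / 2) (by omega)
  have heven : finrank ℝ E = 2 * (finrank ℝ E / 2) := by
    by_contra hodd
    obtain ⟨v, hv⟩ := he.exists_cons hJ (by omega)
    have := hv.two_mul_le_finrank hJ hinj
    omega
  have hc : ∀ i, 0 < ‖J (e i)‖ := fun i =>
    norm_pos_iff.2 ((map_ne_zero_iff J hinj).2 (he.1.ne_zero i))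
  refine ⟨_, heven, e, fun i => ‖J (e i)‖⁻¹ • J (e i), fun i => ‖J (e i)‖, hc,
    he.orthonormal_sum_elim hJ hinj, fun i => ?_, fun i => ?_⟩
  · rw [smul_smul, mul_inv_cancel₀ (hc i).ne', one_smul]
  · rw [map_smul, he.apply_apply hJ, smul_neg, smul_smul, sq, inv_mul_cancel_left₀ (hc i).ne']

end LinearMap.IsSkewAdjoint

end SkewAdjoint

section AlternatingForm

variable {E : Type*} [NormedAddCommGroup E] [InnerProductSpace ℝ E] [FiniteDimensional ℝ E]

theorem exists_inner_apply_eq (ω : E →ₗ[ℝ] E →ₗ[ℝ] ℝ) :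
    ∃ J : E →ₗ[ℝ] E, ∀ u v, ⟪J u, v⟫ = ω u v :=
  ⟨(InnerProductSpace.continuousLinearMapOfBilin (𝕜 := ℝ) (LinearMap.toContinuousLinearMap
    (LinearMap.toContinuousLinearMap.toLinearMap ∘ₗ ω))).toLinearMap,
    fun u v => InnerProductSpace.continuousLinearMapOfBilin_apply _ u v⟩

theorem LinearMap.IsAlt.exists_orthogonal_darboux_family {ω : E →ₗ[ℝ] E →ₗ[ℝ] ℝ}
    (hω : ω.IsAlt) (hsep : ω.SeparatingLeft) :
    ∃ n : ℕ, finrank ℝ E = 2 * n ∧ ∃ (X Y : Fin n → E) (a : Fin n → ℝ), (∀ i, 0 < a i) ∧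
      Orthonormal ℝ (Sum.elim (fun i => a i • X i) fun i => a i • Y i) ∧
      (∀ i j, ω (X i) (Y j) = if i = j then 1 else 0) ∧
      (∀ i j, ω (X i) (X j) = 0) ∧ ∀ i j, ω (Y i) (Y j) = 0 := by
  obtain ⟨J, hJω⟩ := exists_inner_apply_eq ω
  have hJ : (innerₗ E).IsSkewAdjoint J := fun u v => by
    simp only [innerₗ_apply_apply, Pi.neg_apply, inner_neg_right]
    rw [hJω, ← hω.neg, ← hJω, real_inner_comm]
  have hinj : Function.Injective J := (injective_iff_map_eq_zero J).2 fun u hu =>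
    hsep u fun v => by rw [← hJω, hu, inner_zero_left]
  obtain ⟨n, hn, e, f, c, hc, hon, hJe, hJf⟩ := hJ.exists_orthonormal_normal_form hinj
  have hff : ∀ i j, ⟪f i, f j⟫ = if i = j then 1 else 0 := fun i j => by
    simpa using orthonormal_iff_ite.1 hon (.inr i) (.inr j)
  have hfe : ∀ i j, ⟪f i, e j⟫ = 0 := fun i j => by
    simpa using orthonormal_iff_ite.1 hon (.inr i) (.inl j)
  have ha : ∀ i, 0 < √(c i) := fun i => Real.sqrt_pos.2 (hc i)
  refine ⟨n, hn, fun i => (√(c i))⁻¹ • e i, fun i => (√(c i))⁻¹ • f i, fun i => √(c i), ha,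
    ?_, fun i j => ?_, fun i j => ?_, fun i j => ?_⟩
  · convert hon using 1
    ext (i | i) <;> simp [smul_smul, (ha i).ne']
  · rw [← hJω]
    simp only [map_smul, hJe, real_inner_smul_left, real_inner_smul_right, hff]
    split_ifs with h
    · subst h
      rw [mul_one, ← mul_assoc, ← mul_inv, Real.mul_self_sqrt (hc i).le,
        inv_mul_cancel₀ (hc i).ne']
    · simp
  · rw [← hJω]
    simp [hJe, real_inner_smul_left, real_inner_smul_right, hfe]
  · rw [← hJω]
    simp [hJf, real_inner_smul_right, real_inner_comm (f _), hfe]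

end AlternatingForm

theorem LinearIndependent.of_eq_smul {ι K M : Type*} [Field K] [AddCommGroup M] [Module K M]
    {v w : ι → M} {c : ι → K} (hw : LinearIndependent K w) (hc : ∀ i, c i ≠ 0)
    (hwv : ∀ i, w i = c i • v i) : LinearIndependent K v := by
  convert hw.units_smul fun i => (Units.mk0 (c i) (hc i))⁻¹ using 1
  ext i
  simp [hwv, Units.smul_def, smul_smul, hc i]

theorem Submodule.eq_smul_of_finrank_eq_one {K V : Type*} [Field K] [AddCommGroup V]
    [Module K V] {W : Submodule K V} (hW : finrank K W = 1) {z w : V} (hz : z ∈ W)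
    (hw : w ∈ W) {ψ : V →ₗ[K] K} (hψ : ψ z = 1) : w = ψ w • z := by
  have hz0 : (⟨z, hz⟩ : W) ≠ 0 := fun h => by simp_all
  obtain ⟨c, hc⟩ := (finrank_eq_one_iff_of_nonzero' _ hz0).1 hW ⟨w, hw⟩
  rw [← show c • z = w from congrArg Subtype.val hc, map_smul, hψ, smul_eq_mul, mul_one]

theorem Submodule.exists_basis_sum_of_isCompl {ι κ R M : Type*} [Ring R] [AddCommGroup M]
    [Module R M] {p q : Submodule R M} (h : IsCompl p q) (b : Basis ι R p) (c : Basis κ R q) :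
    ∃ d : Basis (ι ⊕ κ) R M, (∀ i, d (.inl i) = b i) ∧ ∀ k, d (.inr k) = c k :=
  ⟨(b.prod c).map (p.prodEquivOfIsCompl q h), fun i => by simp, fun k => by simp⟩

theorem Submodule.exists_basis_sum_unit_of_isCompl {ι K M : Type*} [Fintype ι] [Field K]
    [AddCommGroup M] [Module K M] {p q : Submodule K M} [FiniteDimensional K p]
    (h : IsCompl p q) (hq : finrank K q = 1) {z : q} (hz : z ≠ 0) {v : ι → p}
    (hv : LinearIndependent K v) (hcard : Fintype.card ι = finrank K p) :
    ∃ b : Basis (ι ⊕ Unit) K M, (∀ i, b (.inl i) = v i) ∧ b (.inr ()) = z := by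
  obtain ⟨b, hb₁, hb₂⟩ := exists_basis_sum_of_isCompl h
    (basisOfLinearIndependentOfCardEqFinrank' _ hv hcard)
    (FiniteDimensional.basisSingleton Unit hq z hz)
  exact ⟨b, fun i => by simp [hb₁], by simp [hb₂]⟩

abbrev InnerProductSpace.Core.ofSymmPos {V : Type*} [AddCommGroup V] [Module ℝ V]
    (ip : V → V → ℝ) (hsymm : ∀ u v, ip u v = ip v u)
    (hadd : ∀ u u' v, ip (u + u') v = ip u v + ip u' v)
    (hsmul : ∀ (c : ℝ) u v, ip (c • u) v = c * ip u v)
    (hpos : ∀ u, u ≠ 0 → 0 < ip u u) : InnerProductSpace.Core ℝ V where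
  inner := ip
  conj_inner_symm u v := hsymm v u
  re_inner_nonneg u := by
    rcases eq_or_ne u 0 with rfl | hu
    · simpa using (hsmul 0 0 0).ge
    · exact (hpos u hu).le
  add_left := hadd
  smul_left u v c := hsmul c u v
  definite u hu := by_contra fun h => (hpos u h).ne' hu

section Lie

variable {L : Type*} [LieRing L] [LieAlgebra ℝ L]

theorem lie_mem_bracketSpan {V W : Submodule ℝ L} {x y : L} (hx : x ∈ V) (hy : y ∈ W) :
    ⁅x, y⁆ ∈ bracketSpan V W :=
  Submodule.subset_span (Set.mem_image2_of_mem hx hy)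

theorem bracketSpan_bot_left (W : Submodule ℝ L) : bracketSpan ⊥ W = ⊥ := by
  rw [bracketSpan, Submodule.span_eq_bot]
  rintro _ ⟨x, hx, y, -, rfl⟩
  rw [(Submodule.mem_bot ℝ).1 hx]
  exact zero_lie y

variable {V₁ V₂ : Submodule ℝ L}

theorem eq_zero_of_forall_lie_eq_zero (hsup : V₁ ⊔ V₂ = ⊤) (hinf : V₁ ⊓ V₂ = ⊥)
    (hcentral : ∀ x : L, ∀ y ∈ V₂, ⁅x, y⁆ = 0)
    (hcenter : ∀ x : L, (∀ y : L, ⁅x, y⁆ = 0) → x ∈ V₂) {x : L} (hx : x ∈ V₁)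
    (h : ∀ y ∈ V₁, ⁅x, y⁆ = 0) : x = 0 := by
  have hcen : ∀ y : L, ⁅x, y⁆ = 0 := fun y => by
    obtain ⟨y₁, hy₁, y₂, hy₂, rfl⟩ :=
      Submodule.mem_sup.1 (hsup ▸ Submodule.mem_top : y ∈ V₁ ⊔ V₂)
    rw [lie_add, h y₁ hy₁, hcentral x y₂ hy₂, add_zero]
  have hx₂ : x ∈ V₁ ⊓ V₂ := ⟨hx, hcenter x hcen⟩
  rwa [hinf, Submodule.mem_bot] at hx₂

theorem ne_bot_of_bracketSpan_eq (hbr : bracketSpan V₁ V₁ = V₂) (hV₂ : V₂ ≠ ⊥) : V₁ ≠ ⊥ := by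
  rintro rfl
  exact hV₂ (hbr ▸ bracketSpan_bot_left ⊥)

theorem exists_alternating_form_lie_eq_smul (hsup : V₁ ⊔ V₂ = ⊤)
    (hinf : V₁ ⊓ V₂ = ⊥) (hbr : bracketSpan V₁ V₁ = V₂)
    (hcentral : ∀ x : L, ∀ y ∈ V₂, ⁅x, y⁆ = 0)
    (hcenter : ∀ x : L, (∀ y : L, ⁅x, y⁆ = 0) → x ∈ V₂) (hdim : finrank ℝ V₂ = 1) :
    ∃ Z : V₂, Z ≠ 0 ∧ ∃ β : V₁ →ₗ[ℝ] V₁ →ₗ[ℝ] ℝ, β.IsAlt ∧ β.SeparatingLeft ∧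
      ∀ u v : V₁, ⁅(u : L), (v : L)⁆ = β u v • (Z : L) := by
  have : Nontrivial V₂ := Module.nontrivial_of_finrank_pos (R := ℝ) (by omega)
  obtain ⟨Z, hZ⟩ := exists_ne (0 : V₂)
  obtain ⟨ψ, hψ⟩ := Module.Projective.exists_dual_eq_one ℝ (Subtype.coe_ne_coe.2 hZ)
  let β : V₁ →ₗ[ℝ] V₁ →ₗ[ℝ] ℝ :=
    ((LieModule.toEnd ℝ L L : L →ₗ[ℝ] Module.End ℝ L).compr₂ ψ).compl₁₂ V₁.subtype V₁.subtype
  have hlie : ∀ u v : V₁, ⁅(u : L), (v : L)⁆ = β u v • (Z : L) := fun u v =>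
    Submodule.eq_smul_of_finrank_eq_one hdim Z.2 (hbr ▸ lie_mem_bracketSpan u.2 v.2) hψ
  refine ⟨Z, hZ, β, fun u => by simp [β], fun u hu => ?_, hlie⟩
  exact Subtype.ext <| eq_zero_of_forall_lie_eq_zero hsup hinf hcentral hcenter u.2
    fun y hy => by rw [hlie u ⟨y, hy⟩, hu, zero_smul]

end Lie

theorem statement8 {L : Type*} [LieRing L] [LieAlgebra ℝ L] [Module.Finite ℝ L]
    (V₁ V₂ : Submodule ℝ L)
    (hsup : V₁ ⊔ V₂ = ⊤) (hinf : V₁ ⊓ V₂ = ⊥)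
    (hbr : bracketSpan V₁ V₁ = V₂)
    (hcentral : ∀ x : L, ∀ y ∈ V₂, ⁅x, y⁆ = 0)
    (hcenter : ∀ x : L, (∀ y : L, ⁅x, y⁆ = 0) → x ∈ V₂)
    (hdimV₂ : Module.finrank ℝ V₂ = 1)
    (ip : V₁ → V₁ → ℝ)
    (hip_symm : ∀ u v, ip u v = ip v u)
    (hip_add : ∀ u u' v, ip (u + u') v = ip u v + ip u' v)
    (hip_smul : ∀ (c : ℝ) u v, ip (c • u) v = c * ip u v)
    (hip_pos : ∀ u, u ≠ 0 → 0 < ip u u) :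
    ∃ n : ℕ, 1 ≤ n ∧ Module.finrank ℝ V₁ = 2 * n ∧
      ∃ Z ∈ V₂, ∃ Xv Yv : Fin n → V₁, ∃ a : Fin n → ℝ,
        (∀ i, 0 < a i) ∧
        (∃ b : Module.Basis (Fin n ⊕ Fin n ⊕ Unit) ℝ L,
          (∀ i, b (Sum.inl i) = (Xv i : L)) ∧
          (∀ i, b (Sum.inr (Sum.inl i)) = (Yv i : L)) ∧
          b (Sum.inr (Sum.inr ())) = Z) ∧
        (∀ i j, ⁅(Xv i : L), (Yv j : L)⁆ = if i = j then Z else 0) ∧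
        (∀ i j, ⁅(Xv i : L), (Xv j : L)⁆ = 0) ∧
        (∀ i j, ⁅(Yv i : L), (Yv j : L)⁆ = 0) ∧
        (∀ i j, ip (a i • Xv i) (a j • Xv j) = if i = j then 1 else 0) ∧
        (∀ i j, ip (a i • Yv i) (a j • Yv j) = if i = j then 1 else 0) ∧
        (∀ i j, ip (a i • Xv i) (a j • Yv j) = 0) := by
  obtain ⟨Z, hZ, β, hβ_alt, hβ_sep, hlie⟩ :=
    exists_alternating_form_lie_eq_smul hsup hinf hbr hcentral hcenter hdimV₂
  let core := InnerProductSpace.Core.ofSymmPos ip hip_symm hip_add hip_smul hip_pos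
  let _ := core.toNormedAddCommGroup
  let _ := InnerProductSpace.ofCore core.toCore
  obtain ⟨n, hn, X, Y, a, ha, hon, hXY, hXX, hYY⟩ :=
    hβ_alt.exists_orthogonal_darboux_family hβ_sep
  have hn₁ : 1 ≤ n := Nat.one_le_iff_ne_zero.2 fun h => ne_bot_of_bracketSpan_eq hbr
    (Submodule.one_le_finrank_iff.1 (by omega)) (Submodule.finrank_eq_zero.1 (by omega))
  have hli : LinearIndependent ℝ (Sum.elim X Y) := hon.linearIndependent.of_eq_smul
    (c := Sum.elim a a) (by rintro (i | i) <;> exact (ha i).ne') (by rintro (i | i) <;> rfl)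
  obtain ⟨b, hbXY, hbZ⟩ := Submodule.exists_basis_sum_unit_of_isCompl
    ⟨disjoint_iff.2 hinf, codisjoint_iff.2 hsup⟩ hdimV₂ hZ hli (by simp [hn, two_mul])
  refine ⟨n, hn₁, hn, Z, Z.2, X, Y, a, ha, ⟨b.reindex (Equiv.sumAssoc _ _ _), ?_, ?_, ?_⟩,
    fun i j => ?_, fun i j => ?_, fun i j => ?_, fun i j => ?_, fun i j => ?_, fun i j => ?_⟩
  · intro i; simp [hbXY]
  · intro i; simp [hbXY]
  · simp [hbZ]
  · rw [hlie, hXY]; split_ifs <;> simp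
  · rw [hlie, hXX, zero_smul]
  · rw [hlie, hYY, zero_smul]
  · exact (orthonormal_iff_ite.1 hon (.inl i) (.inl j)).trans (by simp)
  · exact (orthonormal_iff_ite.1 hon (.inr i) (.inr j)).trans (by simp)
  · exact (orthonormal_iff_ite.1 hon (.inl i) (.inr j)).trans (by simp)
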